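/- arXiv:2310.07244 — 5 statements merged into one kernel-verified Lean document; each statement's English description precedes it below -/
import Mathlib

section
/- Let S be a finite state space, L ≥ 1, and for each 0 ≤ l ≤ L let p_l : S → ℝ be strictly positive. For 1 ≤ l ≤ L−1 let T_l : S × S → ℝ≥0 satisfy detailed balance with respect to p_l: p_l(s) T_l(s,t) = p_l(t) T_l(t,s) for all s,t. Then for every path s_1, s_2, …, s_L in S, the forward path probability times the annealed importance weight equals the backward path probability: p_0(s_1) · [Π_{l=1}^{L−1} T_l(s_l, s_{l+1})] · [Π_{l=1}^{L} p_l(s_l)/p_{l−1}(s_l)] = p_L(s_L) · [Π_{l=1}^{L−1} T_l(s_{l+1}, s_l)]. -/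
private lemma ais_aux {S : Type*} (p : ℕ → S → ℝ) (T : ℕ → S → S → ℝ) (s : ℕ → S) :
    ∀ M : ℕ, (∀ l ≤ M + 1, ∀ s : S, 0 < p l s) →
    (∀ l, 1 ≤ l → l ≤ M → ∀ s t : S, p l s * T l s t = p l t * T l t s) →
    p 0 (s 1) * (∏ l ∈ Finset.Icc 1 M, T l (s l) (s (l + 1))) *
        (∏ l ∈ Finset.Icc 1 (M + 1), p l (s l) / p (l - 1) (s l)) =
      p (M + 1) (s (M + 1)) * ∏ l ∈ Finset.Icc 1 M, T l (s (l + 1)) (s l) := by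
  intro M
  induction M with
  | zero =>
    intro hp hdb
    simp only [Finset.Icc_self, Finset.Icc_eq_empty_of_lt (by norm_num : (1:ℕ) > 0),
      Finset.prod_empty, Finset.prod_singleton]
    have h0 := (hp 0 (by omega) (s 1)).ne'
    field_simp
  | succ M ih =>
    intro hp hdb
    have hp' : ∀ l ≤ M + 1, ∀ s : S, 0 < p l s := fun l hl => hp l (by omega)
    have hdb' : ∀ l, 1 ≤ l → l ≤ M → ∀ s t : S, p l s * T l s t = p l t * T l t s :=
      fun l h1 h2 => hdb l h1 (by omega)
    have ihh := ih hp' hdb'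
    rw [Finset.prod_Icc_succ_top (f := fun l => T l (s l) (s (l + 1))) (by omega : 1 ≤ M + 1),
        Finset.prod_Icc_succ_top (f := fun l => p l (s l) / p (l - 1) (s l)) (by omega : 1 ≤ M + 1 + 1),
        Finset.prod_Icc_succ_top (f := fun l => T l (s (l + 1)) (s l)) (by omega : 1 ≤ M + 1)]
    have db := hdb (M + 1) (by omega) (le_refl _) (s (M + 1)) (s (M + 2))
    have hne := (hp (M + 1) (by omega) (s (M + 2))).ne'
    have key : p 0 (s 1) * ((∏ l ∈ Finset.Icc 1 M, T l (s l) (s (l + 1))) *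
          T (M + 1) (s (M + 1)) (s (M + 2))) *
        ((∏ l ∈ Finset.Icc 1 (M + 1), p l (s l) / p (l - 1) (s l)) *
          (p (M + 1 + 1) (s (M + 1 + 1)) / p (M + 1 + 1 - 1) (s (M + 1 + 1)))) =
        (p 0 (s 1) * (∏ l ∈ Finset.Icc 1 M, T l (s l) (s (l + 1))) *
          (∏ l ∈ Finset.Icc 1 (M + 1), p l (s l) / p (l - 1) (s l))) *
        (T (M + 1) (s (M + 1)) (s (M + 2)) *
          (p (M + 2) (s (M + 2)) / p (M + 1) (s (M + 2)))) := by
      norm_num; ring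
    rw [key, ihh]
    have goal2 : p (M + 1) (s (M + 1)) * (T (M + 1) (s (M + 1)) (s (M + 2)) *
        (p (M + 2) (s (M + 2)) / p (M + 1) (s (M + 2)))) =
        p (M + 2) (s (M + 2)) * T (M + 1) (s (M + 2)) (s (M + 1)) := by
      field_simp
      linear_combination p (M + 2) (s (M + 2)) * db
    calc p (M + 1) (s (M + 1)) * (∏ l ∈ Finset.Icc 1 M, T l (s (l + 1)) (s l)) *
          (T (M + 1) (s (M + 1)) (s (M + 2)) *
            (p (M + 2) (s (M + 2)) / p (M + 1) (s (M + 2))))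
        = (p (M + 1) (s (M + 1)) * (T (M + 1) (s (M + 1)) (s (M + 2)) *
            (p (M + 2) (s (M + 2)) / p (M + 1) (s (M + 2))))) *
          (∏ l ∈ Finset.Icc 1 M, T l (s (l + 1)) (s l)) := by ring
      _ = p (M + 1 + 1) (s (M + 1 + 1)) *
          ((∏ l ∈ Finset.Icc 1 M, T l (s (l + 1)) (s l)) *
            T (M + 1) (s (M + 1 + 1)) (s (M + 1))) := by rw [goal2]; ring

/-- The annealed importance sampling path identity: the forward path
probability times the annealed importance weight equals the backward path
probability, given detailed balance of each intermediate kernel `T_l` w.r.t. `p_l`. -/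
theorem ais_path_identity
    {S : Type*} [Fintype S] (L : ℕ) (hL : 1 ≤ L)
    (p : ℕ → S → ℝ) (hp : ∀ l ≤ L, ∀ s : S, 0 < p l s)
    (T : ℕ → S → S → ℝ)
    (hTnn : ∀ l, 1 ≤ l → l ≤ L - 1 → ∀ s t : S, 0 ≤ T l s t)
    (hdb : ∀ l, 1 ≤ l → l ≤ L - 1 → ∀ s t : S, p l s * T l s t = p l t * T l t s)
    (s : ℕ → S) :
    p 0 (s 1) * (∏ l ∈ Finset.Icc 1 (L - 1), T l (s l) (s (l + 1))) *
        (∏ l ∈ Finset.Icc 1 L, p l (s l) / p (l - 1) (s l)) =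
      p L (s L) * ∏ l ∈ Finset.Icc 1 (L - 1), T l (s (l + 1)) (s l) := by
  obtain ⟨M, rfl⟩ : ∃ M, L = M + 1 := ⟨L - 1, by omega⟩
  simpa using ais_aux p T s M (by simpa using hp) (by simpa using hdb)
end

section
/- Under the hypotheses of the annealed importance sampling correctness statement (finite S, strictly positive p_0, …, p_L with p_0 a probability mass function, stochastic kernels T_l in detailed balance with p_l for 1 ≤ l ≤ L−1), for every function f : S → ℝ the weighted-sample expectation equals the expectation under p_L: Σ over all paths (s_1, …, s_L) ∈ S^L of p_0(s_1) · [Π_{l=1}^{L−1} T_l(s_l, s_{l+1})] · [Π_{l=1}^{L} p_l(s_l)/p_{l−1}(s_l)] · f(s_L) equals Σ_{s ∈ S} p_L(s) f(s). -/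
/-- The full AIS path `s_1, …, s_L` encoded by `q : Fin L → S`: for `1 ≤ l ≤ L`
it returns `q (l-1)` (the value for indices outside this range is irrelevant). -/
def aisFullPath {S : Type*} (L : ℕ) (hL : 1 ≤ L) (q : Fin L → S) : ℕ → S :=
  fun l => if h : l - 1 < L then q ⟨l - 1, h⟩ else q ⟨0, hL⟩


lemma ais_path_id {S : Type*} (n : ℕ) (p : ℕ → S → ℝ) (T : ℕ → S → S → ℝ) (s : ℕ → S)
    (hp : ∀ l ≤ n + 1, ∀ x : S, 0 < p l x)
    (hdb : ∀ l, 1 ≤ l → l ≤ n → ∀ x y : S, p l x * T l x y = p l y * T l y x) :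
    p 0 (s 1) * (∏ l ∈ Finset.Icc 1 n, T l (s l) (s (l + 1))) *
      (∏ l ∈ Finset.Icc 1 (n + 1), p l (s l) / p (l - 1) (s l)) =
    (∏ l ∈ Finset.Icc 1 n, T l (s (l + 1)) (s l)) * p (n + 1) (s (n + 1)) := by
  induction n with
  | zero =>
      have h0 : (0:ℝ) < p 0 (s 1) := hp 0 (by omega) _
      simp only [show Finset.Icc 1 0 = (∅ : Finset ℕ) from rfl, Finset.prod_empty,
        Finset.Icc_self, Finset.prod_singleton]
      field_simp
  | succ n ih =>
      have ih' := ih (fun l hl => hp l (by omega)) (fun l h1 h2 => hdb l h1 (by omega))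
      have key := hdb (n + 1) (by omega) (by omega) (s (n + 1)) (s (n + 1 + 1))
      have hpos : p (n + 1) (s (n + 1 + 1)) ≠ 0 := (hp (n + 1) (by omega) _).ne'
      rw [Finset.prod_Icc_succ_top (show 1 ≤ n + 1 by omega) (fun l => T l (s l) (s (l + 1))),
        Finset.prod_Icc_succ_top (show 1 ≤ n + 1 + 1 by omega) (fun l => p l (s l) / p (l - 1) (s l)),
        Finset.prod_Icc_succ_top (show 1 ≤ n + 1 by omega) (fun l => T l (s (l + 1)) (s l))]
      simp only [Nat.add_sub_cancel]
      set A := ∏ l ∈ Finset.Icc 1 n, T l (s l) (s (l + 1)) with hA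
      set B := ∏ l ∈ Finset.Icc 1 (n + 1), p l (s l) / p (l - 1) (s l) with hB
      set C := ∏ l ∈ Finset.Icc 1 n, T l (s (l + 1)) (s l) with hC
      field_simp
      linear_combination (T (n + 1) (s (n + 1)) (s (n + 1 + 1)) * p (n + 1 + 1) (s (n + 1 + 1))) * ih'
        + (C * p (n + 1 + 1) (s (n + 1 + 1))) * key


lemma ais_sum_rev {S : Type*} [Fintype S] (n : ℕ) (g : S → ℝ) (U : ℕ → S → S → ℝ)
    (hrow : ∀ l, 1 ≤ l → l ≤ n → ∀ s : S, ∑ t : S, U l s t = 1) :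
    ∑ q : Fin (n + 1) → S,
        (∏ i : Fin n, U (i + 1) (q i.succ) (q i.castSucc)) * g (q (Fin.last n)) =
      ∑ s : S, g s := by
  induction n generalizing U with
  | zero =>
      simp only [Finset.univ_eq_empty, Finset.prod_empty, one_mul]
      exact Fintype.sum_equiv (Equiv.funUnique (Fin 1) S) _ _ (fun q => rfl)
  | succ n ih =>
      rw [← Equiv.sum_comp (Fin.consEquiv (fun _ : Fin (n + 2) => S))
        (fun q => (∏ i : Fin (n + 1), U (i + 1) (q i.succ) (q i.castSucc)) * g (q (Fin.last (n + 1)))),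
        Fintype.sum_prod_type]
      have step : ∀ (a : S) (q' : Fin (n + 1) → S),
          (∏ i : Fin (n + 1), U (i + 1) ((Fin.cons a q' : Fin (n + 2) → S) i.succ)
              ((Fin.cons a q' : Fin (n + 2) → S) i.castSucc)) *
              g ((Fin.cons a q' : Fin (n + 2) → S) (Fin.last (n + 1)))
          = U 1 (q' 0) a *
            ((∏ i : Fin n, U (i + 1 + 1) (q' i.succ) (q' i.castSucc)) * g (q' (Fin.last n))) := by
        intro a q'
        rw [Fin.prod_univ_succ]
        rw [show Fin.last (n + 1) = (Fin.last n).succ from rfl, Fin.cons_succ]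
        simp only [← Fin.succ_castSucc, Fin.cons_succ, Fin.castSucc_zero, Fin.cons_zero,
          Fin.succ_zero_eq_one, Fin.val_zero, zero_add, Fin.val_succ]
        ring
      simp only [Fin.consEquiv_apply]
      calc ∑ a : S, ∑ q' : Fin (n + 1) → S,
            (∏ i : Fin (n + 1), U (i + 1) ((Fin.cons a q' : Fin (n + 2) → S) i.succ)
                ((Fin.cons a q' : Fin (n + 2) → S) i.castSucc)) *
              g ((Fin.cons a q' : Fin (n + 2) → S) (Fin.last (n + 1)))
          = ∑ q' : Fin (n + 1) → S, ∑ a : S, U 1 (q' 0) a *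
              ((∏ i : Fin n, U (i + 1 + 1) (q' i.succ) (q' i.castSucc)) * g (q' (Fin.last n))) := by
            rw [Finset.sum_comm]
            exact Finset.sum_congr rfl fun q' _ => Finset.sum_congr rfl fun a _ => step a q'
        _ = ∑ q' : Fin (n + 1) → S,
              (∏ i : Fin n, U (i + 1 + 1) (q' i.succ) (q' i.castSucc)) * g (q' (Fin.last n)) := by
            refine Finset.sum_congr rfl fun q' _ => ?_
            rw [← Finset.sum_mul, hrow 1 (by omega) (by omega) (q' 0), one_mul]
        _ = ∑ s : S, g s := by
            have := ih (fun l => U (l + 1)) (fun l h1 h2 s => hrow (l + 1) (by omega) (by omega) s)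
            simpa using this


/-- Correctness of annealed importance sampling for expectations:
for every `f : S → ℝ`, the weighted-sample expectation of `f` at the final
coordinate equals the expectation of `f` under the target `p_L`. -/
theorem ais_weighted_expectation
    {S : Type*} [Fintype S] [DecidableEq S] (L : ℕ) (hL : 1 ≤ L)
    (p : ℕ → S → ℝ) (hp : ∀ l ≤ L, ∀ s : S, 0 < p l s)
    (hp0 : ∑ s : S, p 0 s = 1)
    (T : ℕ → S → S → ℝ)
    (hTnn : ∀ l, 1 ≤ l → l ≤ L - 1 → ∀ s t : S, 0 ≤ T l s t)
    (hTrow : ∀ l, 1 ≤ l → l ≤ L - 1 → ∀ s : S, ∑ t : S, T l s t = 1)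
    (hdb : ∀ l, 1 ≤ l → l ≤ L - 1 → ∀ s t : S, p l s * T l s t = p l t * T l t s)
    (f : S → ℝ) :
    ∑ q : Fin L → S,
        (p 0 (aisFullPath L hL q 1) *
          (∏ l ∈ Finset.Icc 1 (L - 1),
            T l (aisFullPath L hL q l) (aisFullPath L hL q (l + 1))) *
          (∏ l ∈ Finset.Icc 1 L,
            p l (aisFullPath L hL q l) / p (l - 1) (aisFullPath L hL q l)) *
          f (aisFullPath L hL q L)) =
      ∑ s : S, p L s * f s := by
  obtain ⟨n, rfl⟩ : ∃ n, L = n + 1 := ⟨L - 1, by omega⟩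
  simp only [Nat.add_sub_cancel]
  have hpath : ∀ (q : Fin (n + 1) → S) (l : ℕ), 1 ≤ l → l ≤ n + 1 →
      ∀ (h : l - 1 < n + 1), aisFullPath (n + 1) hL q l = q ⟨l - 1, h⟩ := by
    intro q l h1 h2 h
    simp only [aisFullPath]
    rw [dif_pos h]
  rw [← ais_sum_rev n (fun s => p (n + 1) s * f s) T
    (fun l h1 h2 s => hTrow l h1 (by omega) s)]
  refine Finset.sum_congr rfl fun q _ => ?_
  rw [ais_path_id n p T (aisFullPath (n + 1) hL q)
    (fun l hl x => hp l hl x) (fun l h1 h2 x y => hdb l h1 (by omega) x y)]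
  have hlast : aisFullPath (n + 1) hL q (n + 1) = q (Fin.last n) := by
    rw [hpath q (n + 1) (by omega) le_rfl (by omega)]
    exact congrArg q (Fin.ext (by simp))
  have hprodT : (∏ l ∈ Finset.Icc 1 n,
        T l (aisFullPath (n + 1) hL q (l + 1)) (aisFullPath (n + 1) hL q l))
      = ∏ i : Fin n, T (↑i + 1) (q i.succ) (q i.castSucc) := by
    rw [show Finset.Icc 1 n = Finset.Ico 1 (n + 1) from (Finset.Ico_add_one_right_eq_Icc 1 n).symm,
      Finset.prod_Ico_eq_prod_range]
    simp only [Nat.add_sub_cancel]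
    rw [← Fin.prod_univ_eq_prod_range
      (fun l => T (1 + l) (aisFullPath (n + 1) hL q (1 + l + 1)) (aisFullPath (n + 1) hL q (1 + l))) n]
    refine Finset.prod_congr rfl fun i _ => ?_
    rw [hpath q (1 + ↑i + 1) (by omega) (by omega) (by omega),
      hpath q (1 + ↑i) (by omega) (by omega) (by omega)]
    have e1 : (⟨1 + ↑i + 1 - 1, by omega⟩ : Fin (n + 1)) = i.succ := Fin.ext (by simp [Nat.add_comm])
    have e2 : (⟨1 + ↑i - 1, by omega⟩ : Fin (n + 1)) = i.castSucc := Fin.ext (by simp)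
    rw [e1, e2, Nat.add_comm 1 ↑i]
  rw [hprodT, hlast, mul_assoc]
end

section
/- Let S be a set, L ≥ 1, and p_0, p_1, …, p_{2L} : S → ℝ strictly positive functions satisfying the symmetry p_l = p_{2L−l} for all 0 ≤ l ≤ L. For a path (s_1, …, s_{2L}) in S, define the tempered-transition ratio r = Π_{l=1}^{2L} p_l(s_l)/p_{l−1}(s_l), and define the ratio of the reversed path r' = Π_{l=1}^{2L} p_l(s'_l)/p_{l−1}(s'_l) where s'_l = s_{2L+1−l}. Then r' = 1/r. -/
/-- For a palindromic sequence of strictly positive densities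
`p_0, …, p_{2L}` with `p_l = p_{2L-l}`, the tempered-transition ratio of the
reversed path `s'_l = s_{2L+1-l}` is the reciprocal of the ratio of the
original path. -/
theorem tempered_transition_reversed_ratio
    {S : Type*} (L : ℕ) (hL : 1 ≤ L)
    (p : ℕ → S → ℝ) (hp : ∀ l ≤ 2 * L, ∀ s : S, 0 < p l s)
    (hsym : ∀ l ≤ L, p l = p (2 * L - l))
    (s : ℕ → S) :
    (∏ l ∈ Finset.Icc 1 (2 * L),
        p l (s (2 * L + 1 - l)) / p (l - 1) (s (2 * L + 1 - l))) =
      1 / ∏ l ∈ Finset.Icc 1 (2 * L), p l (s l) / p (l - 1) (s l) := by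
  have hsym' : ∀ l ≤ 2 * L, p l = p (2 * L - l) := by
    intro l hl
    rcases le_or_gt l L with h | h
    · exact hsym l h
    · have h1 : 2 * L - l ≤ L := by omega
      have e : 2 * L - (2 * L - l) = l := by omega
      have := hsym (2 * L - l) h1
      rw [e] at this
      exact this.symm
  rw [one_div, ← Finset.prod_inv_distrib]
  refine Finset.prod_nbij' (fun l => 2 * L + 1 - l) (fun l => 2 * L + 1 - l)
    ?_ ?_ ?_ ?_ ?_
  · intro a ha
    simp only [Finset.mem_Icc] at *
    omega
  · intro a ha
    simp only [Finset.mem_Icc] at *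
    omega
  · intro a ha
    simp only [Finset.mem_Icc] at ha
    show 2 * L + 1 - (2 * L + 1 - a) = a
    omega
  · intro a ha
    simp only [Finset.mem_Icc] at ha
    show 2 * L + 1 - (2 * L + 1 - a) = a
    omega
  · intro a ha
    simp only [Finset.mem_Icc] at ha
    show p a (s (2 * L + 1 - a)) / p (a - 1) (s (2 * L + 1 - a)) =
      (p (2 * L + 1 - a) (s (2 * L + 1 - a)) /
        p (2 * L + 1 - a - 1) (s (2 * L + 1 - a)))⁻¹
    have e1 : 2 * L - (a - 1) = 2 * L + 1 - a := by omega
    have e2 : 2 * L - a = 2 * L + 1 - a - 1 := by omega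
    have h1 : p (2 * L + 1 - a) = p (a - 1) := by
      have := hsym' (a - 1) (by omega)
      rw [e1] at this
      exact this.symm
    have h2 : p (2 * L + 1 - a - 1) = p a := by
      have := hsym' a ha.2
      rw [e2] at this
      exact this.symm
    rw [h1, h2, inv_div]
end

section
/- Let S be a finite state space, L ≥ 1, and p_0, …, p_{2L} : S → ℝ strictly positive with p_l = p_{2L−l} for all l; write p := p_0 = p_{2L}. For 1 ≤ l ≤ 2L−1 let T_l : S × S → ℝ≥0 satisfy detailed balance with respect to p_l, and assume the kernel symmetry T_l = T_{2L−l}. Then for every path (s_1, …, s_{2L}) in S, with r = Π_{l=1}^{2L} p_l(s_l)/p_{l−1}(s_l), the accepted forward flux equals the accepted backward flux: p(s_1) · [Π_{l=1}^{2L−1} T_l(s_l, s_{l+1})] · min(1, r) = p(s_{2L}) · [Π_{l=1}^{2L−1} T_l(s_{l+1}, s_l)] · min(1, 1/r). -/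
lemma tempered_aux {S : Type*} (p : ℕ → S → ℝ) (T : ℕ → S → S → ℝ) (s : ℕ → S) :
    ∀ n, 1 ≤ n → (∀ l ≤ n, ∀ x : S, 0 < p l x) →
    (∀ l, 1 ≤ l → l ≤ n - 1 → ∀ x y : S, p l x * T l x y = p l y * T l y x) →
    p 0 (s 1) * (∏ l ∈ Finset.Icc 1 (n - 1), T l (s l) (s (l + 1))) *
      (∏ l ∈ Finset.Icc 1 n, p l (s l) / p (l - 1) (s l)) =
    p n (s n) * ∏ l ∈ Finset.Icc 1 (n - 1), T l (s (l + 1)) (s l) := by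
  intro n
  induction n with
  | zero => omega
  | succ n ih =>
    intro _ hp hdb
    rcases Nat.eq_zero_or_pos n with rfl | hn
    · have h0 : p 0 (s 1) ≠ 0 := ne_of_gt (hp 0 (by omega) _)
      simp [Finset.Icc_self]
      field_simp
    · obtain ⟨m, rfl⟩ : ∃ m, n = m + 1 := ⟨n - 1, by omega⟩
      have h1 : (m + 1 + 1) - 1 = m + 1 := by omega
      have h2 : (m + 1) - 1 = m := by omega
      rw [h1]
      have hTf : (∏ l ∈ Finset.Icc 1 (m + 1), T l (s l) (s (l + 1))) =
          (∏ l ∈ Finset.Icc 1 m, T l (s l) (s (l + 1))) * T (m + 1) (s (m + 1)) (s (m + 2)) :=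
        Finset.prod_Icc_succ_top (by omega) _
      have hTb : (∏ l ∈ Finset.Icc 1 (m + 1), T l (s (l + 1)) (s l)) =
          (∏ l ∈ Finset.Icc 1 m, T l (s (l + 1)) (s l)) * T (m + 1) (s (m + 2)) (s (m + 1)) :=
        Finset.prod_Icc_succ_top (by omega) _
      have hR : (∏ l ∈ Finset.Icc 1 (m + 1 + 1), p l (s l) / p (l - 1) (s l)) =
          (∏ l ∈ Finset.Icc 1 (m + 1), p l (s l) / p (l - 1) (s l)) *
            (p (m + 2) (s (m + 2)) / p (m + 1) (s (m + 2))) :=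
        Finset.prod_Icc_succ_top (by omega) _
      have ihap := ih (by omega) (fun l hl x => hp l (by omega) x)
        (fun l hl1 hl2 x y => hdb l hl1 (by omega) x y)
      rw [h2] at ihap
      have key := hdb (m + 1) (by omega) (by omega) (s (m + 1)) (s (m + 2))
      have hne : p (m + 1) (s (m + 2)) ≠ 0 := ne_of_gt (hp _ (by omega) _)
      rw [hTf, hTb, hR]
      calc p 0 (s 1) * ((∏ l ∈ Finset.Icc 1 m, T l (s l) (s (l + 1))) *
              T (m + 1) (s (m + 1)) (s (m + 2))) *
            ((∏ l ∈ Finset.Icc 1 (m + 1), p l (s l) / p (l - 1) (s l)) *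
              (p (m + 2) (s (m + 2)) / p (m + 1) (s (m + 2))))
          = (p 0 (s 1) * (∏ l ∈ Finset.Icc 1 m, T l (s l) (s (l + 1))) *
              (∏ l ∈ Finset.Icc 1 (m + 1), p l (s l) / p (l - 1) (s l))) *
            (T (m + 1) (s (m + 1)) (s (m + 2)) *
              (p (m + 2) (s (m + 2)) / p (m + 1) (s (m + 2)))) := by ring
        _ = (p (m + 1) (s (m + 1)) * ∏ l ∈ Finset.Icc 1 m, T l (s (l + 1)) (s l)) *
            (T (m + 1) (s (m + 1)) (s (m + 2)) *
              (p (m + 2) (s (m + 2)) / p (m + 1) (s (m + 2)))) := by rw [ihap]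
        _ = p (m + 1 + 1) (s (m + 1 + 1)) *
            ((∏ l ∈ Finset.Icc 1 m, T l (s (l + 1)) (s l)) *
              T (m + 1) (s (m + 2)) (s (m + 1))) := by
            have h3 : m + 1 + 1 = m + 2 := rfl
            rw [h3]
            field_simp
            linear_combination
              (∏ l ∈ Finset.Icc 1 m, T l (s (l + 1)) (s l)) * p (m + 2) (s (m + 2)) * key

/-- In the tempered transition, for every path `(s_1, …, s_{2L})`,
the accepted forward flux equals the accepted backward flux:
`p(s_1) · Π T_l(s_l, s_{l+1}) · min(1, r) = p(s_{2L}) · Π T_l(s_{l+1}, s_l) · min(1, 1/r)`,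
where `r` is the tempered-transition ratio and `p = p_0 = p_{2L}`. -/
theorem tempered_transition_flux_identity
    {S : Type*} [Fintype S] (L : ℕ) (hL : 1 ≤ L)
    (p : ℕ → S → ℝ) (hp : ∀ l ≤ 2 * L, ∀ s : S, 0 < p l s)
    (hsym : ∀ l ≤ L, p l = p (2 * L - l))
    (T : ℕ → S → S → ℝ)
    (hTnn : ∀ l, 1 ≤ l → l ≤ 2 * L - 1 → ∀ s t : S, 0 ≤ T l s t)
    (hTsym : ∀ l, 1 ≤ l → l ≤ 2 * L - 1 → T l = T (2 * L - l))
    (hdb : ∀ l, 1 ≤ l → l ≤ 2 * L - 1 → ∀ s t : S, p l s * T l s t = p l t * T l t s)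
    (s : ℕ → S) :
    p 0 (s 1) * (∏ l ∈ Finset.Icc 1 (2 * L - 1), T l (s l) (s (l + 1))) *
        min 1 (∏ l ∈ Finset.Icc 1 (2 * L), p l (s l) / p (l - 1) (s l)) =
      p 0 (s (2 * L)) * (∏ l ∈ Finset.Icc 1 (2 * L - 1), T l (s (l + 1)) (s l)) *
        min 1 (1 / ∏ l ∈ Finset.Icc 1 (2 * L), p l (s l) / p (l - 1) (s l)) := by
  have hp0 : p 0 = p (2 * L) := by simpa using hsym 0 (Nat.zero_le L)
  have key := tempered_aux p T s (2 * L) (by omega) hp hdb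
  rw [← hp0] at key
  have hrpos : 0 < ∏ l ∈ Finset.Icc 1 (2 * L), p l (s l) / p (l - 1) (s l) := by
    apply Finset.prod_pos
    intro l hl
    rw [Finset.mem_Icc] at hl
    exact div_pos (hp l hl.2 _) (hp (l - 1) (by omega) _)
  set r := ∏ l ∈ Finset.Icc 1 (2 * L), p l (s l) / p (l - 1) (s l) with hrdef
  rcases le_total r 1 with hr | hr
  · rw [min_eq_right hr, min_eq_left (one_le_one_div hrpos hr), mul_one]
    exact key
  · rw [min_eq_left hr, min_eq_right ((div_le_one hrpos).mpr hr), mul_one,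
      mul_one_div, eq_div_iff (ne_of_gt hrpos)]
    exact key
end

section
/- (Claim: the tempered transition satisfies detailed balance.) Let S be a finite state space, L ≥ 1, and p_0, …, p_{2L} : S → ℝ strictly positive with p_l = p_{2L−l} for all l; write p := p_0 = p_{2L}. For 1 ≤ l ≤ 2L−1 let T_l : S × S → ℝ≥0 satisfy detailed balance with respect to p_l, with the kernel symmetry T_l = T_{2L−l}. Define the composite tempered-transition kernel K : S × S → ℝ≥0 by K(s,t) = Σ over intermediate states (s_2, …, s_{2L−1}) ∈ S^{2L−2} of [Π_{l=1}^{2L−1} T_l(s_l, s_{l+1})] · min(1, Π_{l=1}^{2L} p_l(s_l)/p_{l−1}(s_l)), where s_1 := s and s_{2L} := t. Then K satisfies detailed balance with respect to p: p(s) K(s,t) = p(t) K(t,s) for all s, t ∈ S. -/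
/-- The tempered-transition path with endpoints `s_1 = s` and `s_{2L} = t` and
intermediate states `s_2, …, s_{2L-1}` encoded by `q : Fin (2L-2) → S`. -/
def ttPath {S : Type*} (L : ℕ) (s t : S) (q : Fin (2 * L - 2) → S) : ℕ → S :=
  fun l => if l ≤ 1 then s else if h : l - 2 < 2 * L - 2 then q ⟨l - 2, h⟩ else t

private lemma prod_Icc_one_eq_range {M : Type*} [CommMonoid M] (f : ℕ → M) (m : ℕ) :
    ∏ l ∈ Finset.Icc 1 m, f l = ∏ i ∈ Finset.range m, f (i + 1) := by
  rw [show Finset.Icc 1 m = Finset.Ico 1 (m + 1) by rw [Finset.Ico_add_one_right_eq_Icc],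
    Finset.prod_Ico_eq_prod_range]
  simp [Nat.add_comm]

private lemma prod_Icc_reflect {M : Type*} [CommMonoid M] (f : ℕ → M) (m : ℕ) :
    ∏ l ∈ Finset.Icc 1 m, f (m + 1 - l) = ∏ l ∈ Finset.Icc 1 m, f l := by
  rw [prod_Icc_one_eq_range, prod_Icc_one_eq_range fun l => f l]
  rw [← Finset.prod_range_reflect (fun j => f (j + 1)) m]
  refine Finset.prod_congr rfl fun i hi => ?_
  rw [Finset.mem_range] at hi
  congr 1
  omega

private lemma telescope_prod (F : ℕ → ℝ) (m : ℕ) (hF : ∀ i ≤ m, F i ≠ 0) :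
    ∏ i ∈ Finset.range m, F (i + 1) / F i = F m / F 0 := by
  induction m with
  | zero => simp [div_self (hF 0 le_rfl)]
  | succ n ih =>
    have h0 : F 0 ≠ 0 := hF 0 (by omega)
    have hn : F n ≠ 0 := hF n (by omega)
    rw [Finset.prod_range_succ, ih (fun i hi => hF i (by omega))]
    field_simp

/-- The composite tempered-transition kernel
`K(s,t) = Σ_{s_2,…,s_{2L-1}} [Π_{l=1}^{2L-1} T_l(s_l, s_{l+1})] · min(1, r)`
(with `s_1 = s`, `s_{2L} = t`, and `r` the tempered-transition ratio)
satisfies detailed balance with respect to `p = p_0 = p_{2L}`. -/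
theorem tempered_transition_detailed_balance
    {S : Type*} [Fintype S] [DecidableEq S] (L : ℕ) (hL : 1 ≤ L)
    (p : ℕ → S → ℝ) (hp : ∀ l ≤ 2 * L, ∀ s : S, 0 < p l s)
    (hsym : ∀ l ≤ L, p l = p (2 * L - l))
    (T : ℕ → S → S → ℝ)
    (hTnn : ∀ l, 1 ≤ l → l ≤ 2 * L - 1 → ∀ s t : S, 0 ≤ T l s t)
    (hTsym : ∀ l, 1 ≤ l → l ≤ 2 * L - 1 → T l = T (2 * L - l))
    (hdb : ∀ l, 1 ≤ l → l ≤ 2 * L - 1 → ∀ s t : S, p l s * T l s t = p l t * T l t s)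
    (K : S → S → ℝ)
    (hK : ∀ s t : S, K s t =
      ∑ q : Fin (2 * L - 2) → S,
        (∏ l ∈ Finset.Icc 1 (2 * L - 1),
            T l (ttPath L s t q l) (ttPath L s t q (l + 1))) *
          min 1 (∏ l ∈ Finset.Icc 1 (2 * L),
            p l (ttPath L s t q l) / p (l - 1) (ttPath L s t q l))) :
    ∀ s t : S, p 0 s * K s t = p 0 t * K t s := by
  have psym' : ∀ l ≤ 2 * L, p l = p (2 * L - l) := by
    intro l hl
    rcases le_or_gt l L with h | h
    · exact hsym l h
    · have h1 : 2 * L - l ≤ L := by omega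
      have h2 : 2 * L - (2 * L - l) = l := by omega
      rw [hsym (2 * L - l) h1, h2]
  -- core pathwise identity
  have core : ∀ f g : ℕ → S, (∀ l, 1 ≤ l → l ≤ 2 * L → g l = f (2 * L + 1 - l)) →
      p 0 (f 1) * ((∏ l ∈ Finset.Icc 1 (2 * L - 1), T l (f l) (f (l + 1))) *
        min 1 (∏ l ∈ Finset.Icc 1 (2 * L), p l (f l) / p (l - 1) (f l))) =
      p 0 (g 1) * ((∏ l ∈ Finset.Icc 1 (2 * L - 1), T l (g l) (g (l + 1))) *
        min 1 (∏ l ∈ Finset.Icc 1 (2 * L), p l (g l) / p (l - 1) (g l))) := by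
    intro f g hfg
    set r : ℝ := ∏ l ∈ Finset.Icc 1 (2 * L), p l (f l) / p (l - 1) (f l) with hr_def
    set A : ℝ := ∏ l ∈ Finset.Icc 1 (2 * L - 1), p l (f (l + 1)) / p l (f l) with hA_def
    set TB : ℝ := ∏ l ∈ Finset.Icc 1 (2 * L - 1), T l (f (l + 1)) (f l) with hTB_def
    have hrpos : 0 < r := by
      apply Finset.prod_pos
      intro l hl
      rw [Finset.mem_Icc] at hl
      exact div_pos (hp l (by omega) _) (hp (l - 1) (by omega) _)
    -- reversed ratio
    have hRg : (∏ l ∈ Finset.Icc 1 (2 * L), p l (g l) / p (l - 1) (g l)) = r⁻¹ := by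
      have step1 : (∏ l ∈ Finset.Icc 1 (2 * L), p l (g l) / p (l - 1) (g l)) =
          ∏ l ∈ Finset.Icc 1 (2 * L),
            (fun m => p (2 * L + 1 - m) (f m) / p (2 * L - m) (f m)) (2 * L + 1 - l) := by
        refine Finset.prod_congr rfl fun l hl => ?_
        rw [Finset.mem_Icc] at hl
        rw [hfg l hl.1 hl.2]
        congr 2 <;> omega
      rw [step1, prod_Icc_reflect (fun m => p (2 * L + 1 - m) (f m) / p (2 * L - m) (f m)) (2 * L)]
      rw [hr_def, ← Finset.prod_inv_distrib]
      refine Finset.prod_congr rfl fun l hl => ?_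
      rw [Finset.mem_Icc] at hl
      have e1 : p (2 * L + 1 - l) = p (l - 1) := by
        have h2 : 2 * L - (l - 1) = 2 * L + 1 - l := by omega
        rw [psym' (l - 1) (by omega), h2]
      have e2 : p (2 * L - l) = p l := (psym' l (by omega)).symm
      rw [e1, e2, inv_div]
    -- reversed T product
    have hTg : (∏ l ∈ Finset.Icc 1 (2 * L - 1), T l (g l) (g (l + 1))) = TB := by
      have step1 : (∏ l ∈ Finset.Icc 1 (2 * L - 1), T l (g l) (g (l + 1))) =
          ∏ l ∈ Finset.Icc 1 (2 * L - 1),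
            (fun m => T (2 * L - m) (f (m + 1)) (f m)) (2 * L - 1 + 1 - l) := by
        refine Finset.prod_congr rfl fun l hl => ?_
        rw [Finset.mem_Icc] at hl
        rw [hfg l hl.1 (by omega), hfg (l + 1) (by omega) (by omega)]
        have e1 : 2 * L - (2 * L - 1 + 1 - l) = l := by omega
        have e2 : 2 * L - 1 + 1 - l + 1 = 2 * L + 1 - l := by omega
        have e3 : 2 * L - 1 + 1 - l = 2 * L + 1 - (l + 1) := by omega
        show _ = T (2 * L - (2 * L - 1 + 1 - l)) (f (2 * L - 1 + 1 - l + 1))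
          (f (2 * L - 1 + 1 - l))
        rw [e1, e2, e3]
      rw [step1, prod_Icc_reflect (fun m => T (2 * L - m) (f (m + 1)) (f m)) (2 * L - 1)]
      refine Finset.prod_congr rfl fun l hl => ?_
      rw [Finset.mem_Icc] at hl
      rw [← hTsym l hl.1 hl.2]
    -- detailed balance on forward T product
    have hTf : (∏ l ∈ Finset.Icc 1 (2 * L - 1), T l (f l) (f (l + 1))) = A * TB := by
      rw [hA_def, hTB_def, ← Finset.prod_mul_distrib]
      refine Finset.prod_congr rfl fun l hl => ?_
      rw [Finset.mem_Icc] at hl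
      have hpl : p l (f l) ≠ 0 := (hp l (by omega) _).ne'
      have hd := hdb l hl.1 hl.2 (f l) (f (l + 1))
      field_simp
      linarith [hd]
    -- telescoping
    have hA : A * r = p (2 * L) (f (2 * L)) / p 0 (f 1) := by
      have hsplit : Finset.Icc 1 (2 * L) = Finset.Icc 1 (2 * L - 1 + 1) := by
        rw [show 2 * L - 1 + 1 = 2 * L from by omega]
      rw [hr_def, hsplit, Finset.prod_Icc_succ_top (by omega)]
      rw [hA_def, ← mul_assoc, ← Finset.prod_mul_distrib]
      have h1 : (∏ l ∈ Finset.Icc 1 (2 * L - 1),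
          p l (f (l + 1)) / p l (f l) * (p l (f l) / p (l - 1) (f l))) =
          ∏ i ∈ Finset.range (2 * L - 1),
            (fun m => p m (f (m + 1))) (i + 1) / (fun m => p m (f (m + 1))) i := by
        rw [prod_Icc_one_eq_range]
        refine Finset.prod_congr rfl fun i hi => ?_
        rw [Finset.mem_range] at hi
        have hpl : p (i + 1) (f (i + 1)) ≠ 0 := (hp (i + 1) (by omega) (f (i + 1))).ne'
        have hpi : p i (f (i + 1)) ≠ 0 := (hp i (by omega) (f (i + 1))).ne'
        show p (i + 1) (f (i + 1 + 1)) / p (i + 1) (f (i + 1)) *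
            (p (i + 1) (f (i + 1)) / p (i + 1 - 1) (f (i + 1))) =
          p (i + 1) (f (i + 1 + 1)) / p i (f (i + 1))
        rw [Nat.add_sub_cancel]
        field_simp
      rw [h1, telescope_prod (fun m => p m (f (m + 1))) (2 * L - 1)
        (fun i hi => (hp i (by omega) (f (i + 1))).ne')]
      simp only [show 2 * L - 1 + 1 = 2 * L by omega]
      have hne1 : p (2 * L - 1) (f (2 * L)) ≠ 0 := (hp (2 * L - 1) (by omega) _).ne'
      have hne0 : p 0 (f 1) ≠ 0 := (hp 0 (by omega) _).ne'
      field_simp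
    -- min identity and conclusion
    have hmin : min 1 r = r * min 1 r⁻¹ := by
      rw [mul_min_of_nonneg _ _ hrpos.le, mul_one, mul_inv_cancel₀ hrpos.ne', min_comm]
    have hg1 : g 1 = f (2 * L) := by
      rw [hfg 1 le_rfl (by omega), show 2 * L + 1 - 1 = 2 * L from by omega]
    have hp0 : p 0 = p (2 * L) := by simpa using psym' 0 (by omega)
    have hne : p 0 (f 1) ≠ 0 := (hp 0 (by omega) _).ne'
    rw [hRg, hTg, hg1, hTf, hmin]
    calc p 0 (f 1) * (A * TB * (r * min 1 r⁻¹))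
        = (p 0 (f 1) * (A * r)) * (TB * min 1 r⁻¹) := by ring
      _ = p (2 * L) (f (2 * L)) * (TB * min 1 r⁻¹) := by
          rw [hA, mul_div_cancel₀ _ hne]
      _ = p 0 (f (2 * L)) * (TB * min 1 r⁻¹) := by rw [hp0]
  -- assemble
  intro s t
  rw [hK s t, hK t s, Finset.mul_sum, Finset.mul_sum]
  have hrev : Function.Bijective (fun q : Fin (2 * L - 2) → S => q ∘ Fin.rev) :=
    Function.Involutive.bijective (fun q => funext fun i => by
      simp [Function.comp, Fin.rev_rev])
  refine Fintype.sum_bijective _ hrev _ _ fun q => ?_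
  have hfg : ∀ l, 1 ≤ l → l ≤ 2 * L →
      ttPath L t s (q ∘ Fin.rev) l = ttPath L s t q (2 * L + 1 - l) := by
    intro l hl1 hl2
    simp only [ttPath, Function.comp_apply]
    split_ifs
    all_goals try rfl
    all_goals try (exfalso; omega)
    all_goals (apply congrArg q; apply Fin.ext; simp [Fin.val_rev]; omega)
  have h1 : ttPath L s t q 1 = s := by simp [ttPath]
  have h2 : ttPath L t s (q ∘ Fin.rev) 1 = t := by simp [ttPath]
  have hc := core (ttPath L s t q) (ttPath L t s (q ∘ Fin.rev)) hfg
  rw [h1, h2] at hc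
  exact hc
end
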